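/- arXiv:1707.00775 — 5 statements merged into one kernel-verified Lean document; each statement's English description precedes it below -/
import Mathlib

section
/- Let λ ≠ 0 and let ω, ω̃ : ℝ² → ℝ be twice continuously differentiable functions satisfying the Bäcklund transformation system with parameter λ. Then both ω and ω̃ satisfy the sine-Gordon equation: ω_ξη = sin ω and ω̃_ξη = sin ω̃. -/
/-- First partial derivative (w.r.t. the first variable) of a curried function of two
real variables. -/
noncomputable def pd1 (f : ℝ → ℝ → ℝ) (x y : ℝ) : ℝ := deriv (fun x' => f x' y) x

/-- Second partial derivative (w.r.t. the second variable). -/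
noncomputable def pd2 (f : ℝ → ℝ → ℝ) (x y : ℝ) : ℝ := deriv (fun y' => f x y') y

/-- The pair `(ω, ω̃)` satisfies the Bäcklund transformation system for the sine-Gordon
equation with parameter `λ`:
`((ω̃ − ω)/2)_ξ = λ sin((ω̃ + ω)/2)` and `((ω̃ + ω)/2)_η = (1/λ) sin((ω̃ − ω)/2)`. -/
def IsBacklund (lam : ℝ) (ω ω' : ℝ → ℝ → ℝ) : Prop :=
  (∀ ξ η : ℝ, pd1 (fun ξ η => (ω' ξ η - ω ξ η) / 2) ξ η
      = lam * Real.sin ((ω' ξ η + ω ξ η) / 2)) ∧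
  (∀ ξ η : ℝ, pd2 (fun ξ η => (ω' ξ η + ω ξ η) / 2) ξ η
      = (1 / lam) * Real.sin ((ω' ξ η - ω ξ η) / 2))

/-! With `u = (ω̃ - ω)/2` and `v = (ω̃ + ω)/2` the system reads `u_ξ = λ sin v`,
`v_η = λ⁻¹ sin u`. Differentiating the first equation in `η` and the second in `ξ` (for the
`C²` function `v`, `v_ηξ = v_ξη`) gives `u_ξη = sin u cos v` and `v_ξη = sin v cos u`; the
addition formulas for `sin` then yield the sine-Gordon equation for `ω = v - u` and
`ω̃ = v + u`. -/

open Real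

section PartialDerivatives

variable {f g : ℝ → ℝ → ℝ} {x y : ℝ}

theorem hasDerivAt_fderiv_fst (hf : DifferentiableAt ℝ (fun p : ℝ × ℝ => f p.1 p.2) (x, y)) :
    HasDerivAt (fun x' => f x' y) (fderiv ℝ (fun p : ℝ × ℝ => f p.1 p.2) (x, y) (1, 0)) x :=
  (hf.hasFDerivAt.comp_hasDerivAt x ((hasDerivAt_id' x).prodMk (hasDerivAt_const x y)) :)

theorem hasDerivAt_fderiv_snd (hf : DifferentiableAt ℝ (fun p : ℝ × ℝ => f p.1 p.2) (x, y)) :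
    HasDerivAt (fun y' => f x y') (fderiv ℝ (fun p : ℝ × ℝ => f p.1 p.2) (x, y) (0, 1)) y :=
  hf.hasFDerivAt.comp_hasDerivAt y ((hasDerivAt_const y x).prodMk (hasDerivAt_id y))

theorem pd1_eq_fderiv (hf : DifferentiableAt ℝ (fun p : ℝ × ℝ => f p.1 p.2) (x, y)) :
    pd1 f x y = fderiv ℝ (fun p : ℝ × ℝ => f p.1 p.2) (x, y) (1, 0) :=
  (hasDerivAt_fderiv_fst hf).deriv

theorem pd2_eq_fderiv (hf : DifferentiableAt ℝ (fun p : ℝ × ℝ => f p.1 p.2) (x, y)) :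
    pd2 f x y = fderiv ℝ (fun p : ℝ × ℝ => f p.1 p.2) (x, y) (0, 1) :=
  (hasDerivAt_fderiv_snd hf).deriv

theorem contDiff_pd1 {n : WithTop ℕ∞} (hf : ContDiff ℝ (n + 1) fun p : ℝ × ℝ => f p.1 p.2) :
    ContDiff ℝ n fun p : ℝ × ℝ => pd1 f p.1 p.2 := by
  have hdiff := hf.differentiable (by simp)
  simp_rw [pd1_eq_fderiv (hdiff _)]
  exact (hf.fderiv_right le_rfl).clm_apply contDiff_const

theorem contDiff_pd2 {n : WithTop ℕ∞} (hf : ContDiff ℝ (n + 1) fun p : ℝ × ℝ => f p.1 p.2) :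
    ContDiff ℝ n fun p : ℝ × ℝ => pd2 f p.1 p.2 := by
  have hdiff := hf.differentiable (by simp)
  simp_rw [pd2_eq_fderiv (hdiff _)]
  exact (hf.fderiv_right le_rfl).clm_apply contDiff_const

theorem pd1_add (hf : DifferentiableAt ℝ (fun p : ℝ × ℝ => f p.1 p.2) (x, y))
    (hg : DifferentiableAt ℝ (fun p : ℝ × ℝ => g p.1 p.2) (x, y)) :
    pd1 (fun x y => f x y + g x y) x y = pd1 f x y + pd1 g x y :=
  deriv_add (hasDerivAt_fderiv_fst hf).differentiableAt (hasDerivAt_fderiv_fst hg).differentiableAt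

theorem pd1_sub (hf : DifferentiableAt ℝ (fun p : ℝ × ℝ => f p.1 p.2) (x, y))
    (hg : DifferentiableAt ℝ (fun p : ℝ × ℝ => g p.1 p.2) (x, y)) :
    pd1 (fun x y => f x y - g x y) x y = pd1 f x y - pd1 g x y :=
  deriv_sub (hasDerivAt_fderiv_fst hf).differentiableAt (hasDerivAt_fderiv_fst hg).differentiableAt

theorem pd2_add (hf : DifferentiableAt ℝ (fun p : ℝ × ℝ => f p.1 p.2) (x, y))
    (hg : DifferentiableAt ℝ (fun p : ℝ × ℝ => g p.1 p.2) (x, y)) :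
    pd2 (fun x y => f x y + g x y) x y = pd2 f x y + pd2 g x y :=
  deriv_add (hasDerivAt_fderiv_snd hf).differentiableAt (hasDerivAt_fderiv_snd hg).differentiableAt

theorem pd2_sub (hf : DifferentiableAt ℝ (fun p : ℝ × ℝ => f p.1 p.2) (x, y))
    (hg : DifferentiableAt ℝ (fun p : ℝ × ℝ => g p.1 p.2) (x, y)) :
    pd2 (fun x y => f x y - g x y) x y = pd2 f x y - pd2 g x y :=
  deriv_sub (hasDerivAt_fderiv_snd hf).differentiableAt (hasDerivAt_fderiv_snd hg).differentiableAt

theorem pd2_pd1_add (hf : ContDiff ℝ 2 fun p : ℝ × ℝ => f p.1 p.2)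
    (hg : ContDiff ℝ 2 fun p : ℝ × ℝ => g p.1 p.2) :
    pd2 (pd1 fun x y => f x y + g x y) x y = pd2 (pd1 f) x y + pd2 (pd1 g) x y := by
  have hpd1 : (pd1 fun x y => f x y + g x y) = fun x y => pd1 f x y + pd1 g x y :=
    funext₂ fun x y => pd1_add (hf.differentiable two_ne_zero _) (hg.differentiable two_ne_zero _)
  rw [hpd1]
  exact pd2_add ((contDiff_pd1 hf).differentiable one_ne_zero _)
    ((contDiff_pd1 hg).differentiable one_ne_zero _)

theorem pd2_pd1_sub (hf : ContDiff ℝ 2 fun p : ℝ × ℝ => f p.1 p.2)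
    (hg : ContDiff ℝ 2 fun p : ℝ × ℝ => g p.1 p.2) :
    pd2 (pd1 fun x y => f x y - g x y) x y = pd2 (pd1 f) x y - pd2 (pd1 g) x y := by
  have hpd1 : (pd1 fun x y => f x y - g x y) = fun x y => pd1 f x y - pd1 g x y :=
    funext₂ fun x y => pd1_sub (hf.differentiable two_ne_zero _) (hg.differentiable two_ne_zero _)
  rw [hpd1]
  exact pd2_sub ((contDiff_pd1 hf).differentiable one_ne_zero _)
    ((contDiff_pd1 hg).differentiable one_ne_zero _)

theorem pd1_comp {φ : ℝ → ℝ} {φ' : ℝ} (hφ : HasDerivAt φ φ' (f x y))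
    (hf : DifferentiableAt ℝ (fun p : ℝ × ℝ => f p.1 p.2) (x, y)) :
    pd1 (fun x y => φ (f x y)) x y = φ' * pd1 f x y := by
  rw [pd1_eq_fderiv hf]
  exact (hφ.comp x (hasDerivAt_fderiv_fst hf)).deriv

theorem pd2_comp {φ : ℝ → ℝ} {φ' : ℝ} (hφ : HasDerivAt φ φ' (f x y))
    (hf : DifferentiableAt ℝ (fun p : ℝ × ℝ => f p.1 p.2) (x, y)) :
    pd2 (fun x y => φ (f x y)) x y = φ' * pd2 f x y := by
  rw [pd2_eq_fderiv hf]
  exact (hφ.comp y (hasDerivAt_fderiv_snd hf)).deriv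

theorem pd2_pd1_comm (hf : ContDiff ℝ 2 fun p : ℝ × ℝ => f p.1 p.2) :
    pd2 (pd1 f) x y = pd1 (pd2 f) x y := by
  set F : ℝ × ℝ → ℝ := fun p => f p.1 p.2
  have hF := hf.differentiable two_ne_zero
  have hF' : Differentiable ℝ (fderiv ℝ F) :=
    (hf.fderiv_right one_add_one_eq_two.le).differentiable one_ne_zero
  have hsnd : ∀ v w : ℝ × ℝ,
      fderiv ℝ (fun p => fderiv ℝ F p v) (x, y) w = fderiv ℝ (fderiv ℝ F) (x, y) w v := by
    intro v w
    rw [fderiv_clm_apply (hF' _) (differentiableAt_const v)]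
    simp
  have hpd1 : (fun p : ℝ × ℝ => pd1 f p.1 p.2) = fun p => fderiv ℝ F p (1, 0) :=
    funext fun p => pd1_eq_fderiv (hF p)
  have hpd2 : (fun p : ℝ × ℝ => pd2 f p.1 p.2) = fun p => fderiv ℝ F p (0, 1) :=
    funext fun p => pd2_eq_fderiv (hF p)
  rw [pd2_eq_fderiv ((contDiff_pd1 hf).differentiable one_ne_zero _),
    pd1_eq_fderiv ((contDiff_pd2 hf).differentiable one_ne_zero _), hpd1, hpd2, hsnd, hsnd]
  exact hf.contDiffAt.isSymmSndFDerivAt (by simp) _ _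

end PartialDerivatives

def IsSineGordonSolution (ω : ℝ → ℝ → ℝ) : Prop :=
  ∀ ξ η : ℝ, pd2 (pd1 ω) ξ η = sin (ω ξ η)

section BacklundSystem

variable {lam : ℝ} {u v : ℝ → ℝ → ℝ} {x y : ℝ}

theorem pd2_pd1_eq_sin_mul_cos_of_pd1_eq (hlam : lam ≠ 0)
    (hu : ∀ x y, pd1 u x y = lam * sin (v x y)) (hv : pd2 v x y = 1 / lam * sin (u x y))
    (hv_diff : DifferentiableAt ℝ (fun p : ℝ × ℝ => v p.1 p.2) (x, y)) :
    pd2 (pd1 u) x y = sin (u x y) * cos (v x y) :=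
  calc pd2 (pd1 u) x y = pd2 (fun x y => lam * sin (v x y)) x y := by rw [funext₂ hu]
    _ = lam * cos (v x y) * pd2 v x y := pd2_comp ((hasDerivAt_sin _).const_mul lam) hv_diff
    _ = sin (u x y) * cos (v x y) := by rw [hv]; field_simp

theorem pd1_pd2_eq_sin_mul_cos_of_pd2_eq (hlam : lam ≠ 0)
    (hv : ∀ x y, pd2 v x y = 1 / lam * sin (u x y)) (hu : pd1 u x y = lam * sin (v x y))
    (hu_diff : DifferentiableAt ℝ (fun p : ℝ × ℝ => u p.1 p.2) (x, y)) :
    pd1 (pd2 v) x y = sin (v x y) * cos (u x y) :=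
  calc pd1 (pd2 v) x y = pd1 (fun x y => 1 / lam * sin (u x y)) x y := by rw [funext₂ hv]
    _ = 1 / lam * cos (u x y) * pd1 u x y := pd1_comp ((hasDerivAt_sin _).const_mul _) hu_diff
    _ = sin (v x y) * cos (u x y) := by rw [hu]; field_simp

theorem isSineGordonSolution_of_pd1_eq_of_pd2_eq {ω ω' : ℝ → ℝ → ℝ} (hlam : lam ≠ 0)
    (hu : ContDiff ℝ 2 fun p : ℝ × ℝ => u p.1 p.2) (hv : ContDiff ℝ 2 fun p : ℝ × ℝ => v p.1 p.2)
    (hBu : ∀ x y, pd1 u x y = lam * sin (v x y)) (hBv : ∀ x y, pd2 v x y = 1 / lam * sin (u x y))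
    (hω : ∀ x y, ω x y = v x y - u x y) (hω' : ∀ x y, ω' x y = v x y + u x y) :
    IsSineGordonSolution ω ∧ IsSineGordonSolution ω' := by
  have huu x y : pd2 (pd1 u) x y = sin (u x y) * cos (v x y) :=
    pd2_pd1_eq_sin_mul_cos_of_pd1_eq hlam hBu (hBv x y) (hv.differentiable two_ne_zero _)
  have hvv x y : pd2 (pd1 v) x y = sin (v x y) * cos (u x y) := by
    rw [pd2_pd1_comm hv]
    exact pd1_pd2_eq_sin_mul_cos_of_pd2_eq hlam hBv (hBu x y) (hu.differentiable two_ne_zero _)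
  obtain rfl : ω = fun x y => v x y - u x y := funext₂ hω
  obtain rfl : ω' = fun x y => v x y + u x y := funext₂ hω'
  refine ⟨fun x y => ?_, fun x y => ?_⟩ <;> beta_reduce
  · rw [pd2_pd1_sub hv hu, hvv, huu, sin_sub]
    ring
  · rw [pd2_pd1_add hv hu, hvv, huu, sin_add]
    ring

end BacklundSystem

/-- If `(ω, ω̃)` satisfies the Bäcklund transformation system with parameter `λ ≠ 0`,
then both `ω` and `ω̃` satisfy the sine-Gordon equation `ω_ξη = sin ω`. -/
theorem backlund_implies_sineGordon (lam : ℝ) (hlam : lam ≠ 0)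
    (ω ω' : ℝ → ℝ → ℝ)
    (hω : ContDiff ℝ 2 fun p : ℝ × ℝ => ω p.1 p.2)
    (hω' : ContDiff ℝ 2 fun p : ℝ × ℝ => ω' p.1 p.2)
    (hB : IsBacklund lam ω ω') :
    (∀ ξ η : ℝ, pd2 (pd1 ω) ξ η = Real.sin (ω ξ η)) ∧
    (∀ ξ η : ℝ, pd2 (pd1 ω') ξ η = Real.sin (ω' ξ η)) :=
  isSineGordonSolution_of_pd1_eq_of_pd2_eq hlam ((hω'.sub hω).div_const 2)
    ((hω'.add hω).div_const 2) hB.1 hB.2 (fun _ _ => by ring) (fun _ _ => by ring)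
end

section
/- (Bianchi permutability / nonlinear superposition formula.) Let λ₁, λ₂ be nonzero reals with λ₁ ≠ λ₂ and λ₁ ≠ −λ₂, and let ω, ω¹, ω² : ℝ² → ℝ be differentiable functions such that (ω, ω¹) satisfies the Bäcklund transformation system with parameter λ₁ and (ω, ω²) satisfies it with parameter λ₂. Assume cos((ω¹ − ω²)/4) ≠ 0 everywhere, and define ω¹² := ω + 4 arctan[ ((λ₁ + λ₂)/(λ₁ − λ₂)) tan((ω¹ − ω²)/4) ], so that tan((ω¹² − ω)/4) = ((λ₁ + λ₂)/(λ₁ − λ₂)) tan((ω¹ − ω²)/4). Then the pair (ω¹, ω¹²) satisfies the Bäcklund transformation system with parameter λ₂. -/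
/-!
Along each coordinate line the Bäcklund system is a pair of ODEs, so everything reduces to one
variable. With `θ = (ω¹ - ω²)/4` and `k = (λ₁ + λ₂)/(λ₁ - λ₂)`, the two given Bäcklund relations
determine the derivative of `θ`, hence of `ω¹² = ω + 4 arctan (k tan θ)`, and the required relation
for `(ω¹, ω¹²)` becomes a trigonometric identity that only uses `k (λ₁ - λ₂) = λ₁ + λ₂`.
The `η`-equation is the `ξ`-equation for `(ω, -ω¹, -ω²)` with parameters `1/λ₁, 1/λ₂`,
a substitution that leaves `ω¹²` unchanged.
-/

open Real

lemma sin_two_mul_arctan (x : ℝ) : sin (2 * arctan x) = 2 * x / (1 + x ^ 2) := by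
  rw [sin_two_mul, ← tan_mul_cos (cos_arctan_pos x).ne', tan_arctan, mul_assoc, mul_assoc, ← sq,
    cos_sq_arctan]
  ring

lemma cos_two_mul_arctan (x : ℝ) : cos (2 * arctan x) = (1 - x ^ 2) / (1 + x ^ 2) := by
  rw [cos_two_mul, cos_sq_arctan]
  field_simp
  ring

lemma sin_two_mul_arctan_mul_tan (k : ℝ) {θ : ℝ} (hθ : cos θ ≠ 0) :
    sin (2 * arctan (k * tan θ)) = 2 * k * sin θ * cos θ / (cos θ ^ 2 + k ^ 2 * sin θ ^ 2) := by
  rw [sin_two_mul_arctan, tan_eq_sin_div_cos]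
  field_simp

lemma cos_two_mul_arctan_mul_tan (k : ℝ) {θ : ℝ} (hθ : cos θ ≠ 0) :
    cos (2 * arctan (k * tan θ))
      = (cos θ ^ 2 - k ^ 2 * sin θ ^ 2) / (cos θ ^ 2 + k ^ 2 * sin θ ^ 2) := by
  rw [cos_two_mul_arctan, tan_eq_sin_div_cos]
  field_simp

lemma HasDerivAt.arctan_mul_tan {f : ℝ → ℝ} {f' x : ℝ} (k : ℝ) (hf : HasDerivAt f f' x)
    (hx : Real.cos (f x) ≠ 0) :
    HasDerivAt (fun y => Real.arctan (k * Real.tan (f y)))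
      (k * f' / (Real.cos (f x) ^ 2 + k ^ 2 * Real.sin (f x) ^ 2)) x := by
  have htan : HasDerivAt (fun y => Real.tan (f y)) (1 / Real.cos (f x) ^ 2 * f') x :=
    (hasDerivAt_tan hx).comp x hf
  convert (htan.const_mul k).arctan using 1
  rw [tan_eq_sin_div_cos]
  field_simp

lemma mul_sin_add_two_mul_arctan_mul_tan {a b k A θ : ℝ} (hk : k * (a - b) = a + b)
    (hθ : cos θ ≠ 0) :
    b * sin (A + 2 * arctan (k * tan θ))
      = k * (a * sin A - b * sin (A - 2 * θ)) / (cos θ ^ 2 + k ^ 2 * sin θ ^ 2) - a * sin A := by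
  have hD : cos θ ^ 2 + k ^ 2 * sin θ ^ 2 ≠ 0 := by positivity
  rw [sin_add, sin_two_mul_arctan_mul_tan k hθ, cos_two_mul_arctan_mul_tan k hθ, sin_sub,
    sin_two_mul, cos_two_mul]
  field_simp
  -- the `cos A` terms cancel; modulo `sin θ ^ 2 + cos θ ^ 2 = 1` the coefficient of `sin A` is
  -- `(cos θ ^ 2 - k * sin θ ^ 2) * (a + b - k * (a - b))`
  linear_combination (sin A * (k * sin θ ^ 2 - cos θ ^ 2)) * hk
    + (k * (a + b) * sin A) * sin_sq_add_cos_sq θ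

section Superposition

variable {a b : ℝ} {u u₁ u₂ u₁₂ : ℝ → ℝ} {x : ℝ}

theorem hasDerivAt_half_sub_superposition (hab : a ≠ b)
    (h₁ : HasDerivAt (fun y => (u₁ y - u y) / 2) (a * sin ((u₁ x + u x) / 2)) x)
    (h₂ : HasDerivAt (fun y => (u₂ y - u y) / 2) (b * sin ((u₂ x + u x) / 2)) x)
    (hcos : cos ((u₁ x - u₂ x) / 4) ≠ 0)
    (hu₁₂ : ∀ y, u₁₂ y = u y + 4 * arctan ((a + b) / (a - b) * tan ((u₁ y - u₂ y) / 4))) :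
    HasDerivAt (fun y => (u₁₂ y - u₁ y) / 2) (b * sin ((u₁₂ x + u₁ x) / 2)) x := by
  set k := (a + b) / (a - b)
  have hk : k * (a - b) = a + b := div_mul_cancel₀ _ (sub_ne_zero.mpr hab)
  set A := (u₁ x + u x) / 2
  set θ := (u₁ x - u₂ x) / 4
  have hθ :
      HasDerivAt (fun y => (u₁ y - u₂ y) / 4) ((a * sin A - b * sin (A - 2 * θ)) / 2) x := by
    refine ((h₁.sub h₂).div_const 2).congr_deriv ?_ |>.congr_of_eventuallyEq
      (.of_forall fun y => ?_)
    · rw [show A - 2 * θ = (u₂ x + u x) / 2 by ring]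
    · simp only [Pi.sub_apply]; ring
  refine (h₁.neg.add ((hθ.arctan_mul_tan k hcos).const_mul 2)).congr_deriv ?_
    |>.congr_of_eventuallyEq (.of_forall fun y => ?_)
  · rw [hu₁₂, show (u x + 4 * arctan (k * tan θ) + u₁ x) / 2 = A + 2 * arctan (k * tan θ) by ring,
      mul_sin_add_two_mul_arctan_mul_tan hk hcos]
    ring
  · simp only [Pi.neg_apply, Pi.add_apply]; rw [hu₁₂]; ring

theorem hasDerivAt_half_add_superposition (ha : a ≠ 0) (hb : b ≠ 0) (hab : a ≠ b)
    (h₁ : HasDerivAt (fun y => (u₁ y + u y) / 2) (1 / a * sin ((u₁ x - u x) / 2)) x)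
    (h₂ : HasDerivAt (fun y => (u₂ y + u y) / 2) (1 / b * sin ((u₂ x - u x) / 2)) x)
    (hcos : cos ((u₁ x - u₂ x) / 4) ≠ 0)
    (hu₁₂ : ∀ y, u₁₂ y = u y + 4 * arctan ((a + b) / (a - b) * tan ((u₁ y - u₂ y) / 4))) :
    HasDerivAt (fun y => (u₁₂ y + u₁ y) / 2) (1 / b * sin ((u₁₂ x - u₁ x) / 2)) x := by
  have hneg {v : ℝ → ℝ} {c : ℝ}
      (hv : HasDerivAt (fun y => (v y + u y) / 2) (c * sin ((v x - u x) / 2)) x) :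
      HasDerivAt (fun y => (-v y - u y) / 2) (c * sin ((-v x + u x) / 2)) x := by
    refine hv.neg.congr_deriv ?_ |>.congr_of_eventuallyEq (.of_forall fun y => ?_)
    · rw [show (-v x + u x) / 2 = -((v x - u x) / 2) by ring, sin_neg, mul_neg]
    · simp only [Pi.neg_apply]; ring
  have hθ (y : ℝ) : (-u₁ y - -u₂ y) / 4 = -((u₁ y - u₂ y) / 4) := by ring
  have hk : (1 / a + 1 / b) / (1 / a - 1 / b) = -((a + b) / (a - b)) := by
    field_simp
    ring
  have h := hasDerivAt_half_sub_superposition (u := u) (u₁ := fun y => -u₁ y)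
    (u₂ := fun y => -u₂ y) (u₁₂ := u₁₂) (by rwa [ne_eq, one_div, one_div, inv_inj])
    (hneg h₁) (hneg h₂) (by rwa [hθ, cos_neg])
    (fun y => by rw [hu₁₂, hθ, tan_neg, hk, neg_mul_neg])
  simpa only [sub_neg_eq_add, ← sub_eq_add_neg] using h

end Superposition

lemma hasDerivAt_pd1 {f : ℝ → ℝ → ℝ} {x y : ℝ}
    (hf : DifferentiableAt ℝ (fun p : ℝ × ℝ => f p.1 p.2) (x, y)) :
    HasDerivAt (fun x' => f x' y) (pd1 f x y) x :=
  (by fun_prop : DifferentiableAt ℝ (fun x' => f x' y) x).hasDerivAt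

lemma hasDerivAt_pd2 {f : ℝ → ℝ → ℝ} {x y : ℝ}
    (hf : DifferentiableAt ℝ (fun p : ℝ × ℝ => f p.1 p.2) (x, y)) :
    HasDerivAt (fun y' => f x y') (pd2 f x y) y :=
  (by fun_prop : DifferentiableAt ℝ (fun y' => f x y') y).hasDerivAt

namespace IsBacklund

variable {lam : ℝ} {ω ω' : ℝ → ℝ → ℝ}

theorem hasDerivAt_half_sub (hB : IsBacklund lam ω ω')
    (hω : Differentiable ℝ fun p : ℝ × ℝ => ω p.1 p.2)
    (hω' : Differentiable ℝ fun p : ℝ × ℝ => ω' p.1 p.2) (ξ η : ℝ) :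
    HasDerivAt (fun x => (ω' x η - ω x η) / 2) (lam * sin ((ω' ξ η + ω ξ η) / 2)) ξ :=
  hB.1 ξ η ▸ hasDerivAt_pd1 (f := fun ξ η => (ω' ξ η - ω ξ η) / 2) (by fun_prop)

theorem hasDerivAt_half_add (hB : IsBacklund lam ω ω')
    (hω : Differentiable ℝ fun p : ℝ × ℝ => ω p.1 p.2)
    (hω' : Differentiable ℝ fun p : ℝ × ℝ => ω' p.1 p.2) (ξ η : ℝ) :
    HasDerivAt (fun y => (ω' ξ y + ω ξ y) / 2) (1 / lam * sin ((ω' ξ η - ω ξ η) / 2)) η :=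
  hB.2 ξ η ▸ hasDerivAt_pd2 (f := fun ξ η => (ω' ξ η + ω ξ η) / 2) (by fun_prop)

end IsBacklund

theorem bianchi_permutability_general (lam1 lam2 : ℝ)
    (h1 : lam1 ≠ 0) (h2 : lam2 ≠ 0) (h12 : lam1 ≠ lam2)
    (ω ω1 ω2 : ℝ → ℝ → ℝ)
    (hω : Differentiable ℝ fun p : ℝ × ℝ => ω p.1 p.2)
    (hω1 : Differentiable ℝ fun p : ℝ × ℝ => ω1 p.1 p.2)
    (hω2 : Differentiable ℝ fun p : ℝ × ℝ => ω2 p.1 p.2)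
    (hB1 : IsBacklund lam1 ω ω1)
    (hB2 : IsBacklund lam2 ω ω2)
    (hcos : ∀ ξ η : ℝ, Real.cos ((ω1 ξ η - ω2 ξ η) / 4) ≠ 0)
    (ω12 : ℝ → ℝ → ℝ)
    (hω12 : ∀ ξ η : ℝ, ω12 ξ η
      = ω ξ η + 4 * Real.arctan (((lam1 + lam2) / (lam1 - lam2))
          * Real.tan ((ω1 ξ η - ω2 ξ η) / 4))) :
    (∀ ξ η : ℝ, Real.tan ((ω12 ξ η - ω ξ η) / 4)
      = ((lam1 + lam2) / (lam1 - lam2)) * Real.tan ((ω1 ξ η - ω2 ξ η) / 4)) ∧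
    IsBacklund lam2 ω1 ω12 := by
  refine ⟨fun ξ η => ?_, fun ξ η => ?_, fun ξ η => ?_⟩
  · rw [hω12, add_sub_cancel_left, mul_div_cancel_left₀ _ four_ne_zero, tan_arctan]
  · exact (hasDerivAt_half_sub_superposition h12 (hB1.hasDerivAt_half_sub hω hω1 ξ η)
      (hB2.hasDerivAt_half_sub hω hω2 ξ η) (hcos ξ η) (fun x => hω12 x η)).deriv
  · exact (hasDerivAt_half_add_superposition h1 h2 h12 (hB1.hasDerivAt_half_add hω hω1 ξ η)
      (hB2.hasDerivAt_half_add hω hω2 ξ η) (hcos ξ η) (fun y => hω12 ξ y)).deriv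

/-- Bianchi permutability / nonlinear superposition formula for the sine-Gordon
Bäcklund transformation: `ω¹² := ω + 4 arctan[((λ₁+λ₂)/(λ₁−λ₂)) tan((ω¹−ω²)/4)]`
satisfies `tan((ω¹² − ω)/4) = ((λ₁+λ₂)/(λ₁−λ₂)) tan((ω¹−ω²)/4)`, and the pair
`(ω¹, ω¹²)` satisfies the Bäcklund system with parameter `λ₂`. -/
theorem bianchi_permutability (lam1 lam2 : ℝ)
    (h1 : lam1 ≠ 0) (h2 : lam2 ≠ 0) (h12 : lam1 ≠ lam2) (h12' : lam1 ≠ -lam2)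
    (ω ω1 ω2 : ℝ → ℝ → ℝ)
    (hω : Differentiable ℝ fun p : ℝ × ℝ => ω p.1 p.2)
    (hω1 : Differentiable ℝ fun p : ℝ × ℝ => ω1 p.1 p.2)
    (hω2 : Differentiable ℝ fun p : ℝ × ℝ => ω2 p.1 p.2)
    (hB1 : IsBacklund lam1 ω ω1)
    (hB2 : IsBacklund lam2 ω ω2)
    (hcos : ∀ ξ η : ℝ, Real.cos ((ω1 ξ η - ω2 ξ η) / 4) ≠ 0)
    (ω12 : ℝ → ℝ → ℝ)
    (hω12 : ∀ ξ η : ℝ, ω12 ξ η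
      = ω ξ η + 4 * Real.arctan (((lam1 + lam2) / (lam1 - lam2))
          * Real.tan ((ω1 ξ η - ω2 ξ η) / 4))) :
    (∀ ξ η : ℝ, Real.tan ((ω12 ξ η - ω ξ η) / 4)
      = ((lam1 + lam2) / (lam1 - lam2)) * Real.tan ((ω1 ξ η - ω2 ξ η) / 4)) ∧
    IsBacklund lam2 ω1 ω12 :=
  bianchi_permutability_general lam1 lam2 h1 h2 h12 ω ω1 ω2 hω hω1 hω2 hB1 hB2 hcos ω12 hω12
end

section
/- In the travelling-wave Bäcklund setup, the function δ(α,β) := f(α)/(a(α)k²) + (c/(a(α)k)) · tanh(c(β + b(α) + K)) satisfies the partial differential equation δ_β = [ (1 − δ²) sin w − 2δ(cos w − λ²/k) + λ(δ² + 1) w' ] / (4λ), where w, w' are evaluated at α. Here b : ℝ → ℝ is an arbitrary differentiable function and K an arbitrary real constant. -/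
/-!
Fix `α`. In `β` the Bäcklund equation is a Riccati equation `δ_β = P δ² + Q δ + R` with constant
coefficients `P = -k a(α)`, `Q = 2 f(α) / k`, `R = (sin w + λ w') / (4λ)`. Such an equation is solved
by `-Q/(2P) - (c/P) tanh(c (β + s))` as soon as `Q² - 4PR = 4c²`, and in the travelling-wave setup
this discriminant identity follows from `sin² w + cos² w = 1` and the first integral
`k w'² = 2l - 2 cos w`.
-/

open Real

theorem Real.hasDerivAt_tanh (x : ℝ) : HasDerivAt tanh (1 - tanh x ^ 2) x := by
  have hcosh : cosh x ≠ 0 := (cosh_pos x).ne'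
  have hquot := (hasDerivAt_sinh x).div (hasDerivAt_cosh x) hcosh
  rw [show sinh / cosh = tanh from funext fun y => (tanh_eq_sinh_div_cosh y).symm] at hquot
  refine hquot.congr_deriv ?_
  rw [tanh_eq_sinh_div_cosh]
  field_simp

theorem hasDerivAt_tanh_riccati {P Q R c : ℝ} (hP : P ≠ 0) (hdisc : Q ^ 2 - 4 * P * R = 4 * c ^ 2)
    (s β : ℝ) :
    HasDerivAt (fun β' => -Q / (2 * P) - c / P * tanh (c * (β' + s)))
      (P * (-Q / (2 * P) - c / P * tanh (c * (β + s))) ^ 2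
        + Q * (-Q / (2 * P) - c / P * tanh (c * (β + s))) + R) β := by
  have hphase : HasDerivAt (fun β' => c * (β' + s)) c β := by
    simpa using ((hasDerivAt_id β).add_const s).const_mul c
  have hsol := (((hasDerivAt_tanh _).comp β hphase).const_mul (c / P)).const_sub (-Q / (2 * P))
  refine hsol.congr_deriv ?_
  field_simp
  linear_combination hdisc

theorem travellingWave_discriminant {k lam l s co d : ℝ} (hk : k ≠ 0) (hlam : lam ≠ 0)
    (hpyth : s ^ 2 + co ^ 2 = 1) (hfi : k * d ^ 2 = 2 * l - 2 * co)
    (hdisc : 0 ≤ lam ^ 4 - 2 * k * l * lam ^ 2 + k ^ 2) :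
    (lam / 4 - k * co / (4 * lam)) ^ 2
        + k ^ 3 * (s / (4 * k * lam) - d / (4 * k)) * ((s + lam * d) / (4 * lam))
      = k ^ 2 * (sqrt (lam ^ 4 - 2 * k * l * lam ^ 2 + k ^ 2) / (4 * k * lam)) ^ 2 := by
  rw [div_pow, sq_sqrt hdisc]
  field_simp
  linear_combination (k ^ 2) * hpyth - (k * lam ^ 2) * hfi

theorem delta_beta_equation_general (k lam l K : ℝ) (hk : k ≠ 0) (hlam : lam ≠ 0)
    (w : ℝ → ℝ)
    (hfi : ∀ α : ℝ, k * (deriv w α) ^ 2 = 2 * l - 2 * Real.cos (w α))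
    (hdisc : lam ^ 4 - 2 * k * l * lam ^ 2 + k ^ 2 > 0)
    (a f : ℝ → ℝ) (c : ℝ)
    (ha : ∀ α : ℝ, a α = Real.sin (w α) / (4 * k * lam) - deriv w α / (4 * k))
    (hf : ∀ α : ℝ, f α = lam / 4 - k * Real.cos (w α) / (4 * lam))
    (hc : c = Real.sqrt (lam ^ 4 - 2 * k * l * lam ^ 2 + k ^ 2) / (4 * k * lam))
    (ha0 : ∀ α : ℝ, a α ≠ 0)
    (b : ℝ → ℝ)
    (δ : ℝ → ℝ → ℝ)
    (hδ : ∀ α β : ℝ, δ α β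
      = f α / (a α * k ^ 2) + (c / (a α * k)) * Real.tanh (c * (β + b α + K))) :
    ∀ α β : ℝ, pd2 δ α β
      = ((1 - (δ α β) ^ 2) * Real.sin (w α)
          - 2 * δ α β * (Real.cos (w α) - lam ^ 2 / k)
          + lam * ((δ α β) ^ 2 + 1) * deriv w α) / (4 * lam) := by
  intro α β
  set R := (sin (w α) + lam * deriv w α) / (4 * lam)
  have hP : -k * a α ≠ 0 := mul_ne_zero (neg_ne_zero.mpr hk) (ha0 α)
  have hdiscα : (2 * f α / k) ^ 2 - 4 * (-k * a α) * R = 4 * c ^ 2 := by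
    have hwave := travellingWave_discriminant hk hlam (sin_sq_add_cos_sq (w α)) (hfi α) hdisc.le
    rw [← ha α, ← hf α, ← hc] at hwave
    field_simp
    linear_combination 4 * hwave
  have hδα : (fun β' => δ α β') = fun β' =>
      -(2 * f α / k) / (2 * (-k * a α)) - c / (-k * a α) * tanh (c * (β' + (b α + K))) := by
    funext β'
    rw [hδ, ← add_assoc]
    field_simp
    ring
  rw [pd2, hδα, (hasDerivAt_tanh_riccati hP hdiscα (b α + K) β).deriv, ← congrFun hδα β]
  simp only [R, ha α, hf α]
  field_simp
  ring

/-- In the travelling-wave Bäcklund setup, the ansatz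
`δ(α,β) = f(α)/(a(α)k²) + (c/(a(α)k)) tanh(c(β + b(α) + K))`
satisfies the β-equation of the Bäcklund system:
`δ_β = [(1 − δ²) sin w − 2δ(cos w − λ²/k) + λ(δ² + 1) w'] / (4λ)`. -/
theorem delta_beta_equation (k lam l K : ℝ) (hk : k ≠ 0) (hlam : lam ≠ 0)
    (w : ℝ → ℝ) (hw : Differentiable ℝ w) (hw' : Differentiable ℝ (deriv w))
    (hode : ∀ α : ℝ, k * deriv (deriv w) α = Real.sin (w α))
    (hfi : ∀ α : ℝ, k * (deriv w α) ^ 2 = 2 * l - 2 * Real.cos (w α))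
    (hdisc : lam ^ 4 - 2 * k * l * lam ^ 2 + k ^ 2 > 0)
    (a f : ℝ → ℝ) (c : ℝ)
    (ha : ∀ α : ℝ, a α = Real.sin (w α) / (4 * k * lam) - deriv w α / (4 * k))
    (hf : ∀ α : ℝ, f α = lam / 4 - k * Real.cos (w α) / (4 * lam))
    (hc : c = Real.sqrt (lam ^ 4 - 2 * k * l * lam ^ 2 + k ^ 2) / (4 * k * lam))
    (ha0 : ∀ α : ℝ, a α ≠ 0)
    (b : ℝ → ℝ) (hb : Differentiable ℝ b)
    (δ : ℝ → ℝ → ℝ)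
    (hδ : ∀ α β : ℝ, δ α β
      = f α / (a α * k ^ 2) + (c / (a α * k)) * Real.tanh (c * (β + b α + K))) :
    ∀ α β : ℝ, pd2 δ α β
      = ((1 - (δ α β) ^ 2) * Real.sin (w α)
          - 2 * δ α β * (Real.cos (w α) - lam ^ 2 / k)
          + lam * ((δ α β) ^ 2 + 1) * deriv w α) / (4 * lam) :=
  delta_beta_equation_general k lam l K hk hlam w hfi hdisc a f c ha hf hc ha0 b δ hδ
end

section
/- (Proposition 2, g-part.) In the travelling-wave Bäcklund setup with b'(α) = (λ w' + sin w)/(λ w' − sin w), K ∈ ℝ, B(α,β) = c(β + b(α) + K) and δ = f/(ak²) + (c/(ak)) tanh B, define g(α,β) := 4c²k³a(α)(1 − tanh² B) / ( k⁴ a(α)² + f(α)² + 2ck f(α) tanh B + c²k² tanh² B ), assuming the denominator never vanishes. Then g satisfies g_α = g · [ (1 − δ²)(λ² + k cos w) + 2kδ sin w ] / (2kλ(δ² + 1)) and g_β = g · [ (1 − δ²)(λ² − k cos w) − 2kδ sin w ] / (2kλ(δ² + 1)), where w is evaluated at α. -/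
open Real

theorem HasDerivAt.tanh {f : ℝ → ℝ} {f' x : ℝ} (hf : HasDerivAt f f' x) :
    HasDerivAt (fun x => Real.tanh (f x)) ((1 - Real.tanh (f x) ^ 2) * f') x :=
  (Real.hasDerivAt_tanh (f x)).comp x hf

-- `s`, `co`, `v` stand for `sin w`, `cos w`, `w'` at the current point `α`.
noncomputable def riccatiSnd (k lam s co v y : ℝ) : ℝ :=
  (lam * v + s) / (4 * lam) + (lam ^ 2 - k * co) / (2 * k * lam) * y
    + (lam * v - s) / (4 * lam) * y ^ 2

noncomputable def riccatiFst (k lam s co v y : ℝ) : ℝ :=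
  (lam * v - s) / (4 * lam) + (lam ^ 2 + k * co) / (2 * k * lam) * y
    + (lam * v + s) / (4 * lam) * y ^ 2

theorem sq_four_mul_c {k lam l c t v : ℝ} (hk : k ≠ 0) (hlam : lam ≠ 0)
    (hdisc : 0 ≤ lam ^ 4 - 2 * k * l * lam ^ 2 + k ^ 2)
    (hc : c = √(lam ^ 4 - 2 * k * l * lam ^ 2 + k ^ 2) / (4 * k * lam))
    (hfi : k * v ^ 2 = 2 * l - 2 * cos t) :
    (4 * k * lam * c) ^ 2
      = (lam ^ 2 - k * cos t) ^ 2 + k ^ 2 * (sin t ^ 2 - lam ^ 2 * v ^ 2) := by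
  have hsq : (4 * k * lam * c) ^ 2 = lam ^ 4 - 2 * k * l * lam ^ 2 + k ^ 2 := by
    rw [hc, mul_div_cancel₀ _ (by positivity), sq_sqrt hdisc]
  linear_combination hsq + lam ^ 2 * k * hfi - k ^ 2 * sin_sq_add_cos_sq t

section Delta

variable {k lam a f c s co v : ℝ}

theorem riccatiSnd_delta {T : ℝ} (hk : k ≠ 0) (hlam : lam ≠ 0)
    (ha : a = s / (4 * k * lam) - v / (4 * k)) (hf : f = lam / 4 - k * co / (4 * lam))
    (hc : (4 * k * lam * c) ^ 2 = (lam ^ 2 - k * co) ^ 2 + k ^ 2 * (s ^ 2 - lam ^ 2 * v ^ 2))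
    (ha0 : a ≠ 0) :
    riccatiSnd k lam s co v (f / (a * k ^ 2) + c / (a * k) * T)
      = c ^ 2 * (1 - T ^ 2) / (a * k) := by
  have hA : s - lam * v ≠ 0 := by
    rintro h; apply ha0; rw [ha]; field_simp; linear_combination h
  subst ha hf
  unfold riccatiSnd
  field_simp
  linear_combination (-2 * (s - lam * v)) * hc

theorem four_mul_riccatiSnd_delta_div {T : ℝ} (hk : k ≠ 0) (hlam : lam ≠ 0)
    (ha : a = s / (4 * k * lam) - v / (4 * k)) (hf : f = lam / 4 - k * co / (4 * lam))
    (hc : (4 * k * lam * c) ^ 2 = (lam ^ 2 - k * co) ^ 2 + k ^ 2 * (s ^ 2 - lam ^ 2 * v ^ 2))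
    (ha0 : a ≠ 0) :
    4 * riccatiSnd k lam s co v (f / (a * k ^ 2) + c / (a * k) * T)
        / (1 + (f / (a * k ^ 2) + c / (a * k) * T) ^ 2)
      = 4 * c ^ 2 * k ^ 3 * a * (1 - T ^ 2)
        / (k ^ 4 * a ^ 2 + f ^ 2 + 2 * c * k * f * T + c ^ 2 * k ^ 2 * T ^ 2) := by
  have hD : k ^ 4 * a ^ 2 + f ^ 2 + 2 * c * k * f * T + c ^ 2 * k ^ 2 * T ^ 2 ≠ 0 := by
    rw [show k ^ 4 * a ^ 2 + f ^ 2 + 2 * c * k * f * T + c ^ 2 * k ^ 2 * T ^ 2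
      = (k ^ 2 * a) ^ 2 + (f + c * k * T) ^ 2 by ring]
    positivity
  rw [riccatiSnd_delta hk hlam ha hf hc ha0, div_eq_div_iff (by positivity) hD]
  field_simp
  ring

theorem hasDerivAt_delta_snd {β : ℝ} {φ : ℝ → ℝ} (hk : k ≠ 0) (hlam : lam ≠ 0)
    (ha : a = s / (4 * k * lam) - v / (4 * k)) (hf : f = lam / 4 - k * co / (4 * lam))
    (hc : (4 * k * lam * c) ^ 2 = (lam ^ 2 - k * co) ^ 2 + k ^ 2 * (s ^ 2 - lam ^ 2 * v ^ 2))
    (ha0 : a ≠ 0) (hφ : HasDerivAt φ c β) :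
    HasDerivAt (fun β => f / (a * k ^ 2) + c / (a * k) * tanh (φ β))
      (riccatiSnd k lam s co v (f / (a * k ^ 2) + c / (a * k) * tanh (φ β))) β := by
  rw [riccatiSnd_delta hk hlam ha hf hc ha0]
  exact ((hφ.tanh.const_mul _).const_add _).congr_deriv (by field_simp)

theorem riccatiFst_delta {a' f' b' v' T : ℝ} (hk : k ≠ 0) (hlam : lam ≠ 0)
    (ha : a = s / (4 * k * lam) - v / (4 * k)) (hf : f = lam / 4 - k * co / (4 * lam))
    (ha' : a' = co * v / (4 * k * lam) - v' / (4 * k)) (hf' : f' = k * s * v / (4 * lam))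
    (hode : k * v' = s) (hb' : b' = (lam * v + s) / (lam * v - s))
    (hc : (4 * k * lam * c) ^ 2 = (lam ^ 2 - k * co) ^ 2 + k ^ 2 * (s ^ 2 - lam ^ 2 * v ^ 2))
    (ha0 : a ≠ 0) :
    riccatiFst k lam s co v (f / (a * k ^ 2) + c / (a * k) * T)
      = (f' * a - f * a') / (a ^ 2 * k ^ 2) - c * a' / (a ^ 2 * k) * T
        + c ^ 2 * b' * (1 - T ^ 2) / (a * k) := by
  have hA : s - lam * v ≠ 0 := by
    rintro h; apply ha0; rw [ha]; field_simp; linear_combination h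
  have hA' : lam * v - s ≠ 0 := fun h => hA (by linear_combination -h)
  rw [eq_div_iff hA'] at hb'
  subst ha hf ha' hf'
  unfold riccatiFst
  field_simp
  linear_combination 2 * (s + lam * v) * hc + 32 * lam ^ 2 * k ^ 2 * c ^ 2 * (1 - T ^ 2) * hb'
    + (8 * lam ^ 2 * k * co - 32 * lam ^ 3 * k * c * T - 8 * lam ^ 4) * hode

end Delta

theorem hasDerivAt_delta_fst {k lam c b' α : ℝ} {w a f φ : ℝ → ℝ} (hk : k ≠ 0)
    (hlam : lam ≠ 0) (hw : DifferentiableAt ℝ w α) (hw' : DifferentiableAt ℝ (deriv w) α)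
    (hode : k * deriv (deriv w) α = sin (w α))
    (ha : ∀ x, a x = sin (w x) / (4 * k * lam) - deriv w x / (4 * k))
    (hf : ∀ x, f x = lam / 4 - k * cos (w x) / (4 * lam))
    (hc : (4 * k * lam * c) ^ 2
      = (lam ^ 2 - k * cos (w α)) ^ 2 + k ^ 2 * (sin (w α) ^ 2 - lam ^ 2 * deriv w α ^ 2))
    (ha0 : a α ≠ 0)
    (hb' : b' = (lam * deriv w α + sin (w α)) / (lam * deriv w α - sin (w α)))
    (hφ : HasDerivAt φ (c * b') α) :
    HasDerivAt (fun x => f x / (a x * k ^ 2) + c / (a x * k) * tanh (φ x))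
      (riccatiFst k lam (sin (w α)) (cos (w α)) (deriv w α)
        (f α / (a α * k ^ 2) + c / (a α * k) * tanh (φ α))) α := by
  have hA : HasDerivAt a
      (cos (w α) * deriv w α / (4 * k * lam) - deriv (deriv w) α / (4 * k)) α := by
    rw [show a = _ from funext ha]
    exact (hw.hasDerivAt.sin.div_const _).sub (hw'.hasDerivAt.div_const _)
  have hF : HasDerivAt f (k * sin (w α) * deriv w α / (4 * lam)) α := by
    rw [show f = _ from funext hf]
    exact ((hw.hasDerivAt.cos.const_mul k).div_const _).const_sub _ |>.congr_deriv (by ring)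
  rw [riccatiFst_delta hk hlam (ha α) (hf α) rfl rfl hode hb' hc ha0]
  have hak : a α * k ^ 2 ≠ 0 := by positivity
  refine (((hF.div (hA.mul_const _) hak).add (((hasDerivAt_const _ c).div (hA.mul_const k)
    (by positivity)).mul hφ.tanh)).congr_deriv ?_)
  simp only [Pi.div_apply]
  field_simp
  ring

theorem hasDerivAt_potential_snd {k lam s co v x : ℝ} {y : ℝ → ℝ} (hk : k ≠ 0)
    (hlam : lam ≠ 0) (hy : HasDerivAt y (riccatiSnd k lam s co v (y x)) x) :
    HasDerivAt (fun x => 4 * riccatiSnd k lam s co v (y x) / (1 + y x ^ 2))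
      (4 * riccatiSnd k lam s co v (y x) / (1 + y x ^ 2)
        * ((1 - y x ^ 2) * (lam ^ 2 - k * co) - 2 * k * y x * s)
        / (2 * k * lam * (y x ^ 2 + 1))) x := by
  have hR : HasDerivAt (fun x => riccatiSnd k lam s co v (y x))
      (((lam ^ 2 - k * co) / (2 * k * lam) + 2 * ((lam * v - s) / (4 * lam)) * y x)
        * riccatiSnd k lam s co v (y x)) x := by
    have h := ((hy.const_mul ((lam ^ 2 - k * co) / (2 * k * lam))).const_add
      ((lam * v + s) / (4 * lam))).add ((hy.pow 2).const_mul ((lam * v - s) / (4 * lam)))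
    exact h.congr_deriv (by unfold riccatiSnd; norm_num; ring)
  have hden : 1 + y x ^ 2 ≠ 0 := by positivity
  refine ((hR.const_mul 4).div ((hy.pow 2).const_add 1) hden).congr_deriv ?_
  simp only [Pi.pow_apply]
  unfold riccatiSnd
  field_simp
  ring

theorem hasDerivAt_potential_fst {k lam x : ℝ} {w y : ℝ → ℝ} (hk : k ≠ 0)
    (hlam : lam ≠ 0) (hw : DifferentiableAt ℝ w x) (hw' : DifferentiableAt ℝ (deriv w) x)
    (hode : k * deriv (deriv w) x = sin (w x))
    (hy : HasDerivAt y (riccatiFst k lam (sin (w x)) (cos (w x)) (deriv w x) (y x)) x) :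
    HasDerivAt (fun x => 4 * riccatiSnd k lam (sin (w x)) (cos (w x)) (deriv w x) (y x)
        / (1 + y x ^ 2))
      (4 * riccatiSnd k lam (sin (w x)) (cos (w x)) (deriv w x) (y x) / (1 + y x ^ 2)
        * ((1 - y x ^ 2) * (lam ^ 2 + k * cos (w x)) + 2 * k * y x * sin (w x))
        / (2 * k * lam * (y x ^ 2 + 1))) x := by
  have hs := hw.hasDerivAt.sin
  have hco := hw.hasDerivAt.cos
  have hv := hw'.hasDerivAt
  have hR : HasDerivAt (fun x => riccatiSnd k lam (sin (w x)) (cos (w x)) (deriv w x) (y x))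
      ((lam * deriv (deriv w) x + cos (w x) * deriv w x) / (4 * lam)
        + k * sin (w x) * deriv w x / (2 * k * lam) * y x
        + (lam ^ 2 - k * cos (w x)) / (2 * k * lam)
          * riccatiFst k lam (sin (w x)) (cos (w x)) (deriv w x) (y x)
        + (lam * deriv (deriv w) x - cos (w x) * deriv w x) / (4 * lam) * y x ^ 2
        + (lam * deriv w x - sin (w x)) / (4 * lam)
          * (2 * y x * riccatiFst k lam (sin (w x)) (cos (w x)) (deriv w x) (y x))) x := by
    have h := ((((hv.const_mul lam).add hs).div_const (4 * lam)).add
      ((((hco.const_mul k).const_sub (lam ^ 2)).div_const (2 * k * lam)).mul hy)).add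
      ((((hv.const_mul lam).sub hs).div_const (4 * lam)).mul (hy.pow 2))
    exact h.congr_deriv (by simp only [Pi.sub_apply, Pi.pow_apply]; norm_num; ring)
  have hden : 1 + y x ^ 2 ≠ 0 := by positivity
  refine ((hR.const_mul 4).div ((hy.pow 2).const_add 1) hden).congr_deriv ?_
  simp only [Pi.pow_apply]
  unfold riccatiSnd riccatiFst
  field_simp
  linear_combination 16 * lam ^ 2 * k * (1 + y x ^ 2) ^ 3 * hode

theorem associated_potential_g_general (k lam l K : ℝ) (hk : k ≠ 0) (hlam : lam ≠ 0)
    (w : ℝ → ℝ) (hw : Differentiable ℝ w) (hw' : Differentiable ℝ (deriv w))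
    (hode : ∀ α : ℝ, k * deriv (deriv w) α = Real.sin (w α))
    (hfi : ∀ α : ℝ, k * (deriv w α) ^ 2 = 2 * l - 2 * Real.cos (w α))
    (hdisc : lam ^ 4 - 2 * k * l * lam ^ 2 + k ^ 2 > 0)
    (a f : ℝ → ℝ) (c : ℝ)
    (ha : ∀ α : ℝ, a α = Real.sin (w α) / (4 * k * lam) - deriv w α / (4 * k))
    (hf : ∀ α : ℝ, f α = lam / 4 - k * Real.cos (w α) / (4 * lam))
    (hc : c = Real.sqrt (lam ^ 4 - 2 * k * l * lam ^ 2 + k ^ 2) / (4 * k * lam))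
    (ha0 : ∀ α : ℝ, a α ≠ 0)
    (b : ℝ → ℝ) (hb : Differentiable ℝ b)
    (hb' : ∀ α : ℝ, deriv b α
      = (lam * deriv w α + Real.sin (w α)) / (lam * deriv w α - Real.sin (w α)))
    (B : ℝ → ℝ → ℝ) (hB : ∀ α β : ℝ, B α β = c * (β + b α + K))
    (δ : ℝ → ℝ → ℝ)
    (hδ : ∀ α β : ℝ, δ α β
      = f α / (a α * k ^ 2) + (c / (a α * k)) * Real.tanh (B α β))
    (g : ℝ → ℝ → ℝ)
    (hg : ∀ α β : ℝ, g α β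
      = 4 * c ^ 2 * k ^ 3 * a α * (1 - (Real.tanh (B α β)) ^ 2)
        / (k ^ 4 * (a α) ^ 2 + (f α) ^ 2 + 2 * c * k * f α * Real.tanh (B α β)
            + c ^ 2 * k ^ 2 * (Real.tanh (B α β)) ^ 2)) :
    ∀ α β : ℝ,
      pd1 g α β = g α β
        * ((1 - (δ α β) ^ 2) * (lam ^ 2 + k * Real.cos (w α))
            + 2 * k * δ α β * Real.sin (w α))
        / (2 * k * lam * ((δ α β) ^ 2 + 1)) ∧
      pd2 g α β = g α β
        * ((1 - (δ α β) ^ 2) * (lam ^ 2 - k * Real.cos (w α))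
            - 2 * k * δ α β * Real.sin (w α))
        / (2 * k * lam * ((δ α β) ^ 2 + 1)) := by
  intro α β
  have hc' x := sq_four_mul_c hk hlam hdisc.le hc (hfi x)
  have hg' x y : g x y = 4 * riccatiSnd k lam (sin (w x)) (cos (w x)) (deriv w x) (δ x y)
      / (1 + δ x y ^ 2) := by
    rw [hg, hδ, four_mul_riccatiSnd_delta_div hk hlam (ha x) (hf x) (hc' x) (ha0 x)]
  have hδα : HasDerivAt (fun x => δ x β)
      (riccatiFst k lam (sin (w α)) (cos (w α)) (deriv w α) (δ α β)) α := by
    have hBα : HasDerivAt (fun x => B x β) (c * deriv b α) α := by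
      simp only [hB]
      exact (((hb α).hasDerivAt.const_add β).add_const K).const_mul c
    simp only [hδ]
    exact hasDerivAt_delta_fst hk hlam (hw α) (hw' α) (hode α) ha hf (hc' α) (ha0 α) (hb' α)
      hBα
  have hδβ : HasDerivAt (fun y => δ α y)
      (riccatiSnd k lam (sin (w α)) (cos (w α)) (deriv w α) (δ α β)) β := by
    have hBβ : HasDerivAt (fun y => B α y) c β := by
      simp only [hB]
      exact (((hasDerivAt_id β).add_const (b α)).add_const K).const_mul c
        |>.congr_deriv (mul_one c)
    simp only [hδ]
    exact hasDerivAt_delta_snd hk hlam (ha α) (hf α) (hc' α) (ha0 α) hBβ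
  constructor
  · simp only [pd1, hg']
    exact (hasDerivAt_potential_fst hk hlam (hw α) (hw' α) (hode α) hδα).deriv
  · simp only [pd2, hg']
    exact (hasDerivAt_potential_snd hk hlam hδβ).deriv

/-- Proposition 2 (g-part): in the travelling-wave Bäcklund setup, the closed-form
expression `g = 4c²k³a(1 − tanh²B)/(k⁴a² + f² + 2ckf tanh B + c²k² tanh²B)` satisfies
`g_α = g[(1 − δ²)(λ² + k cos w) + 2kδ sin w]/(2kλ(δ² + 1))` and
`g_β = g[(1 − δ²)(λ² − k cos w) − 2kδ sin w]/(2kλ(δ² + 1))`. -/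
theorem associated_potential_g (k lam l K : ℝ) (hk : k ≠ 0) (hlam : lam ≠ 0)
    (w : ℝ → ℝ) (hw : Differentiable ℝ w) (hw' : Differentiable ℝ (deriv w))
    (hode : ∀ α : ℝ, k * deriv (deriv w) α = Real.sin (w α))
    (hfi : ∀ α : ℝ, k * (deriv w α) ^ 2 = 2 * l - 2 * Real.cos (w α))
    (hdisc : lam ^ 4 - 2 * k * l * lam ^ 2 + k ^ 2 > 0)
    (a f : ℝ → ℝ) (c : ℝ)
    (ha : ∀ α : ℝ, a α = Real.sin (w α) / (4 * k * lam) - deriv w α / (4 * k))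
    (hf : ∀ α : ℝ, f α = lam / 4 - k * Real.cos (w α) / (4 * lam))
    (hc : c = Real.sqrt (lam ^ 4 - 2 * k * l * lam ^ 2 + k ^ 2) / (4 * k * lam))
    (ha0 : ∀ α : ℝ, a α ≠ 0)
    (hne : ∀ α : ℝ, lam * deriv w α - Real.sin (w α) ≠ 0)
    (b : ℝ → ℝ) (hb : Differentiable ℝ b)
    (hb' : ∀ α : ℝ, deriv b α
      = (lam * deriv w α + Real.sin (w α)) / (lam * deriv w α - Real.sin (w α)))
    (B : ℝ → ℝ → ℝ) (hB : ∀ α β : ℝ, B α β = c * (β + b α + K))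
    (δ : ℝ → ℝ → ℝ)
    (hδ : ∀ α β : ℝ, δ α β
      = f α / (a α * k ^ 2) + (c / (a α * k)) * Real.tanh (B α β))
    (hden : ∀ α β : ℝ,
      k ^ 4 * (a α) ^ 2 + (f α) ^ 2 + 2 * c * k * f α * Real.tanh (B α β)
        + c ^ 2 * k ^ 2 * (Real.tanh (B α β)) ^ 2 ≠ 0)
    (g : ℝ → ℝ → ℝ)
    (hg : ∀ α β : ℝ, g α β
      = 4 * c ^ 2 * k ^ 3 * a α * (1 - (Real.tanh (B α β)) ^ 2)
        / (k ^ 4 * (a α) ^ 2 + (f α) ^ 2 + 2 * c * k * f α * Real.tanh (B α β)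
            + c ^ 2 * k ^ 2 * (Real.tanh (B α β)) ^ 2)) :
    ∀ α β : ℝ,
      pd1 g α β = g α β
        * ((1 - (δ α β) ^ 2) * (lam ^ 2 + k * Real.cos (w α))
            + 2 * k * δ α β * Real.sin (w α))
        / (2 * k * lam * ((δ α β) ^ 2 + 1)) ∧
      pd2 g α β = g α β
        * ((1 - (δ α β) ^ 2) * (lam ^ 2 - k * Real.cos (w α))
            - 2 * k * δ α β * Real.sin (w α))
        / (2 * k * lam * ((δ α β) ^ 2 + 1)) :=
  associated_potential_g_general k lam l K hk hlam w hw hw' hode hfi hdisc a f c ha hf hc ha0 b hb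
    hb' B hB δ hδ g hg
end

section
/- Let λ ≠ 0, let ω, ω̃ : U → ℝ (U ⊆ ℝ² open) be twice continuously differentiable and satisfy the Bäcklund transformation system with parameter λ, and let x, y, g : U → ℝ be twice continuously differentiable functions satisfying the associated potentials system with g > 0 on U. Suppose V ⊆ ℝ² is open and ψ : V → U is a twice continuously differentiable map such that x(ψ(u,v)) = u and y(ψ(u,v)) = v for all (u,v) ∈ V. Then the function Z(u,v) := 1/g(ψ(u,v))² satisfies the constant astigmatism equation Z_vv + (1/Z)_uu + 2 = 0 on V. -/
/-- Partial derivative w.r.t. the first coordinate of a function on `ℝ × ℝ`. -/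
noncomputable def pdx (F : ℝ × ℝ → ℝ) (p : ℝ × ℝ) : ℝ := deriv (fun u => F (u, p.2)) p.1

/-- Partial derivative w.r.t. the second coordinate of a function on `ℝ × ℝ`. -/
noncomputable def pdy (F : ℝ × ℝ → ℝ) (p : ℝ × ℝ) : ℝ := deriv (fun v => F (p.1, v)) p.2

/-!
Since `(x, y) ∘ ψ = id`, the Jacobian of `ψ` is the inverse of the Jacobian of `(x, y)`, which
the potential equations give explicitly. Writing `α = (ω̃ + ω)/2` and `β = (ω̃ - ω)/2`, that
Jacobian has determinant `-2 sin α sin β`, so both sines are nonzero, and the coordinate fields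
`∂_u`, `∂_v` become explicit first-order operators in `(ξ, η)`. They give
`Z_v = (cot β - cot α) / g` and `(1/Z)_u = g (cot α + cot β)`. Differentiating once more, the
derivatives `α_ξ` and `β_η`, about which nothing is known, cancel between the two terms, and
what remains is `-(1 + cot² α) - (1 + cot² β) + cot² α + cot² β = -2`.
-/

open Real Filter Topology

section PartialDerivatives

variable {E : Type*} [NormedAddCommGroup E] [NormedSpace ℝ E]

theorem hasDerivAt_horizontal {f : ℝ × ℝ → E} {p : ℝ × ℝ} (hf : DifferentiableAt ℝ f p) :
    HasDerivAt (fun u => f (u, p.2)) (fderiv ℝ f p (1, 0)) p.1 :=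
  hf.hasFDerivAt.comp_hasDerivAt p.1 ((hasDerivAt_id p.1).prodMk (hasDerivAt_const p.1 p.2))

theorem hasDerivAt_vertical {f : ℝ × ℝ → E} {p : ℝ × ℝ} (hf : DifferentiableAt ℝ f p) :
    HasDerivAt (fun v => f (p.1, v)) (fderiv ℝ f p (0, 1)) p.2 :=
  hf.hasFDerivAt.comp_hasDerivAt p.2 ((hasDerivAt_const p.2 p.1).prodMk (hasDerivAt_id p.2))

variable {F G : ℝ × ℝ → ℝ} {p : ℝ × ℝ}

theorem pdx_eq_fderiv (hF : DifferentiableAt ℝ F p) : pdx F p = fderiv ℝ F p (1, 0) :=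
  (hasDerivAt_horizontal hF).deriv

theorem pdy_eq_fderiv (hF : DifferentiableAt ℝ F p) : pdy F p = fderiv ℝ F p (0, 1) :=
  (hasDerivAt_vertical hF).deriv

theorem fderiv_apply_eq_pdx_add_pdy (hF : DifferentiableAt ℝ F p) (v : ℝ × ℝ) :
    fderiv ℝ F p v = pdx F p * v.1 + pdy F p * v.2 := by
  have hv : v = v.1 • ((1, 0) : ℝ × ℝ) + v.2 • ((0, 1) : ℝ × ℝ) := by simp
  rw [hv, map_add, map_smul, map_smul, pdx_eq_fderiv hF, pdy_eq_fderiv hF, smul_eq_mul,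
    smul_eq_mul, mul_comm, mul_comm v.2]
  simp

theorem hasDerivAt_comp_curve {γ : ℝ → ℝ × ℝ} {v : ℝ × ℝ} {t : ℝ}
    (hF : DifferentiableAt ℝ F (γ t)) (hγ : HasDerivAt γ v t) :
    HasDerivAt (fun s => F (γ s)) (pdx F (γ t) * v.1 + pdy F (γ t) * v.2) t := by
  rw [← fderiv_apply_eq_pdx_add_pdy hF]
  exact hF.hasFDerivAt.comp_hasDerivAt t hγ

theorem pdx_mul_add_pdy_mul_eq {γ : ℝ → ℝ × ℝ} {v : ℝ × ℝ} {f : ℝ → ℝ} {c t : ℝ}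
    (hF : DifferentiableAt ℝ F (γ t)) (hγ : HasDerivAt γ v t) (hf : HasDerivAt f c t)
    (h : ∀ᶠ s in 𝓝 t, F (γ s) = f s) : pdx F (γ t) * v.1 + pdy F (γ t) * v.2 = c :=
  (hasDerivAt_comp_curve hF hγ).unique (hf.congr_of_eventuallyEq h)

theorem tendsto_horizontal (p : ℝ × ℝ) : Tendsto (fun u : ℝ => (u, p.2)) (𝓝 p.1) (𝓝 p) :=
  (continuous_id.prodMk continuous_const).tendsto' p.1 p rfl

theorem tendsto_vertical (p : ℝ × ℝ) : Tendsto (fun v : ℝ => (p.1, v)) (𝓝 p.2) (𝓝 p) :=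
  (continuous_const.prodMk continuous_id).tendsto' p.2 p rfl

theorem Filter.EventuallyEq.pdx_eq (h : F =ᶠ[𝓝 p] G) : pdx F p = pdx G p :=
  (h.comp_tendsto (tendsto_horizontal p)).deriv_eq

theorem Filter.EventuallyEq.pdy_eq (h : F =ᶠ[𝓝 p] G) : pdy F p = pdy G p :=
  (h.comp_tendsto (tendsto_vertical p)).deriv_eq

end PartialDerivatives

theorem HasDerivAt.cot {f : ℝ → ℝ} {f' t : ℝ} (hf : HasDerivAt f f' t) (hs : Real.sin (f t) ≠ 0) :
    HasDerivAt (fun s => Real.cot (f s)) (-(1 + Real.cot (f t) ^ 2) * f') t := by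
  simp only [cot_eq_cos_div_sin]
  refine (hf.cos.fun_div hf.sin hs).congr_deriv ?_
  field_simp
  ring

/-- `α` and `β` stand for `(ω̃ + ω)/2` and `(ω̃ - ω)/2`; `pdx_β` and `pdy_α` are the Bäcklund
system. -/
structure BacklundPotentialsAt (lam : ℝ) (α β g x y : ℝ × ℝ → ℝ) (q : ℝ × ℝ) : Prop where
  lam_ne_zero : lam ≠ 0
  differentiableAt_α : DifferentiableAt ℝ α q
  differentiableAt_β : DifferentiableAt ℝ β q
  differentiableAt_g : DifferentiableAt ℝ g q
  differentiableAt_x : DifferentiableAt ℝ x q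
  differentiableAt_y : DifferentiableAt ℝ y q
  pdx_β : pdx β q = lam * sin (α q)
  pdy_α : pdy α q = 1 / lam * sin (β q)
  pdx_x : pdx x q = lam * g q * sin (α q)
  pdy_x : pdy x q = 1 / lam * g q * sin (β q)
  pdx_y : pdx y q = lam / g q * sin (α q)
  pdy_y : pdy y q = -(1 / (lam * g q)) * sin (β q)
  pdx_g : pdx g q = lam * g q * cos (α q)
  pdy_g : pdy g q = g q / lam * cos (β q)
  g_ne_zero : g q ≠ 0

structure IsLocalRightInverseAt (x y : ℝ × ℝ → ℝ) (ψ : ℝ × ℝ → ℝ × ℝ) (r : ℝ × ℝ) : Prop where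
  differentiableAt : DifferentiableAt ℝ ψ r
  x_comp : ∀ᶠ r' in 𝓝 r, x (ψ r') = r'.1
  y_comp : ∀ᶠ r' in 𝓝 r, y (ψ r') = r'.2

namespace BacklundPotentialsAt

variable {lam : ℝ} {α β g x y : ℝ × ℝ → ℝ}

theorem solve_jacobian {q : ℝ × ℝ} (h : BacklundPotentialsAt lam α β g x y q)
    {v : ℝ × ℝ} {s t : ℝ} (hx : pdx x q * v.1 + pdy x q * v.2 = s)
    (hy : pdx y q * v.1 + pdy y q * v.2 = t) :
    2 * lam * g q * sin (α q) * v.1 = s + g q ^ 2 * t ∧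
      2 * g q * sin (β q) * v.2 = lam * (s - g q ^ 2 * t) := by
  have hlam := h.lam_ne_zero
  have hg := h.g_ne_zero
  rw [h.pdx_x, h.pdy_x] at hx
  rw [h.pdx_y, h.pdy_y] at hy
  field_simp at hx hy
  constructor
  · refine mul_left_cancel₀ hlam ?_
    linear_combination hx + g q * hy
  · linear_combination hx - g q * hy

variable {ψ : ℝ × ℝ → ℝ × ℝ} {r : ℝ × ℝ} {F : ℝ × ℝ → ℝ}

theorem sin_ne_zero_and_fderiv_horizontal (h : BacklundPotentialsAt lam α β g x y (ψ r))
    (hψ : IsLocalRightInverseAt x y ψ r) :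
    sin (α (ψ r)) ≠ 0 ∧ sin (β (ψ r)) ≠ 0 ∧
      fderiv ℝ ψ r (1, 0) =
        (1 / (2 * lam * g (ψ r) * sin (α (ψ r))), lam / (2 * g (ψ r) * sin (β (ψ r)))) := by
  have hγ := hasDerivAt_horizontal hψ.differentiableAt
  obtain ⟨h1, h2⟩ := h.solve_jacobian
    (pdx_mul_add_pdy_mul_eq h.differentiableAt_x hγ (hasDerivAt_id _)
      ((tendsto_horizontal r).eventually hψ.x_comp))
    (pdx_mul_add_pdy_mul_eq h.differentiableAt_y hγ (hasDerivAt_const _ _)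
      ((tendsto_horizontal r).eventually hψ.y_comp))
  have hα : sin (α (ψ r)) ≠ 0 := fun h0 => by simp [h0] at h1
  have hβ : sin (β (ψ r)) ≠ 0 := fun h0 => h.lam_ne_zero (by simpa [h0] using h2.symm)
  have hg := h.g_ne_zero
  refine ⟨hα, hβ, Prod.ext ?_ ?_⟩
  · rw [eq_div_iff (by simp [hα, hg, h.lam_ne_zero])]
    linear_combination h1
  · rw [eq_div_iff (by simp [hβ, hg])]
    linear_combination h2

theorem fderiv_vertical (h : BacklundPotentialsAt lam α β g x y (ψ r))
    (hψ : IsLocalRightInverseAt x y ψ r) :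
    fderiv ℝ ψ r (0, 1) =
      (g (ψ r) / (2 * lam * sin (α (ψ r))), -(lam * g (ψ r)) / (2 * sin (β (ψ r)))) := by
  obtain ⟨hα, hβ, -⟩ := h.sin_ne_zero_and_fderiv_horizontal hψ
  have hγ := hasDerivAt_vertical hψ.differentiableAt
  obtain ⟨h1, h2⟩ := h.solve_jacobian
    (pdx_mul_add_pdy_mul_eq h.differentiableAt_x hγ (hasDerivAt_const _ _)
      ((tendsto_vertical r).eventually hψ.x_comp))
    (pdx_mul_add_pdy_mul_eq h.differentiableAt_y hγ (hasDerivAt_id _)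
      ((tendsto_vertical r).eventually hψ.y_comp))
  have hg := h.g_ne_zero
  refine Prod.ext ?_ ?_
  · rw [eq_div_iff (by simp [hα, h.lam_ne_zero])]
    exact mul_left_cancel₀ hg (by linear_combination h1)
  · rw [eq_div_iff (by simp [hβ])]
    exact mul_left_cancel₀ hg (by linear_combination h2)

theorem hasDerivAt_comp_horizontal (h : BacklundPotentialsAt lam α β g x y (ψ r))
    (hψ : IsLocalRightInverseAt x y ψ r) (hF : DifferentiableAt ℝ F (ψ r)) :
    HasDerivAt (fun u => F (ψ (u, r.2)))
      ((pdx F (ψ r) / (lam * sin (α (ψ r))) + lam * pdy F (ψ r) / sin (β (ψ r))) / (2 * g (ψ r)))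
      r.1 := by
  obtain ⟨hα, hβ, hv⟩ := h.sin_ne_zero_and_fderiv_horizontal hψ
  refine (hasDerivAt_comp_curve hF (hasDerivAt_horizontal hψ.differentiableAt)).congr_deriv ?_
  rw [hv]
  field_simp

theorem hasDerivAt_comp_vertical (h : BacklundPotentialsAt lam α β g x y (ψ r))
    (hψ : IsLocalRightInverseAt x y ψ r) (hF : DifferentiableAt ℝ F (ψ r)) :
    HasDerivAt (fun v => F (ψ (r.1, v)))
      (g (ψ r) * (pdx F (ψ r) / (lam * sin (α (ψ r))) - lam * pdy F (ψ r) / sin (β (ψ r))) / 2)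
      r.2 := by
  obtain ⟨hα, hβ, -⟩ := h.sin_ne_zero_and_fderiv_horizontal hψ
  refine (hasDerivAt_comp_curve hF (hasDerivAt_vertical hψ.differentiableAt)).congr_deriv ?_
  rw [h.fderiv_vertical hψ]
  field_simp
  ring

theorem pdy_one_div_sq_comp (h : BacklundPotentialsAt lam α β g x y (ψ r))
    (hψ : IsLocalRightInverseAt x y ψ r) :
    pdy (fun r => 1 / g (ψ r) ^ 2) r = (cot (β (ψ r)) - cot (α (ψ r))) / g (ψ r) := by
  obtain ⟨hα, hβ, -⟩ := h.sin_ne_zero_and_fderiv_horizontal hψ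
  have hlam := h.lam_ne_zero
  have hg := h.g_ne_zero
  have hgv := h.hasDerivAt_comp_vertical hψ h.differentiableAt_g
  rw [h.pdx_g, h.pdy_g] at hgv
  refine ((hasDerivAt_const _ (1 : ℝ)).fun_div (hgv.fun_pow 2) (pow_ne_zero 2 hg)).deriv.trans ?_
  simp only [cot_eq_cos_div_sin]
  field_simp
  ring

theorem pdx_sq_comp (h : BacklundPotentialsAt lam α β g x y (ψ r))
    (hψ : IsLocalRightInverseAt x y ψ r) :
    pdx (fun r => g (ψ r) ^ 2) r = g (ψ r) * (cot (α (ψ r)) + cot (β (ψ r))) := by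
  obtain ⟨hα, hβ, -⟩ := h.sin_ne_zero_and_fderiv_horizontal hψ
  have hlam := h.lam_ne_zero
  have hg := h.g_ne_zero
  have hgu := h.hasDerivAt_comp_horizontal hψ h.differentiableAt_g
  rw [h.pdx_g, h.pdy_g] at hgu
  refine (hgu.fun_pow 2).deriv.trans ?_
  simp only [cot_eq_cos_div_sin]
  field_simp
  ring

theorem pdy_add_pdx_add_two_eq_zero (h : BacklundPotentialsAt lam α β g x y (ψ r))
    (hψ : IsLocalRightInverseAt x y ψ r) :
    pdy (fun r => (cot (β (ψ r)) - cot (α (ψ r))) / g (ψ r)) r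
      + pdx (fun r => g (ψ r) * (cot (α (ψ r)) + cot (β (ψ r)))) r + 2 = 0 := by
  obtain ⟨hα, hβ, -⟩ := h.sin_ne_zero_and_fderiv_horizontal hψ
  have hlam := h.lam_ne_zero
  have hg := h.g_ne_zero
  have hαu := h.hasDerivAt_comp_horizontal hψ h.differentiableAt_α
  have hβu := h.hasDerivAt_comp_horizontal hψ h.differentiableAt_β
  have hgu := h.hasDerivAt_comp_horizontal hψ h.differentiableAt_g
  have hαv := h.hasDerivAt_comp_vertical hψ h.differentiableAt_α
  have hβv := h.hasDerivAt_comp_vertical hψ h.differentiableAt_β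
  have hgv := h.hasDerivAt_comp_vertical hψ h.differentiableAt_g
  rw [h.pdy_α] at hαu hαv
  rw [h.pdx_β] at hβu hβv
  rw [h.pdx_g, h.pdy_g] at hgu hgv
  simp only [pdx, pdy]
  rw [(((hβv.cot hβ).fun_sub (hαv.cot hα)).fun_div hgv hg).deriv,
    (hgu.fun_mul ((hαu.cot hα).fun_add (hβu.cot hβ))).deriv]
  simp only [cot_eq_cos_div_sin]
  field_simp
  ring

end BacklundPotentialsAt

def SatisfiesCAEAt (z : ℝ × ℝ → ℝ) (p : ℝ × ℝ) : Prop :=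
  pdy (pdy z) p + pdx (pdx fun q => 1 / z q) p + 2 = 0

theorem satisfiesCAEAt_one_div_sq_comp {lam : ℝ} {α β g x y : ℝ × ℝ → ℝ}
    {ψ : ℝ × ℝ → ℝ × ℝ} {V : Set (ℝ × ℝ)} (hV : IsOpen V)
    (h : ∀ r ∈ V, BacklundPotentialsAt lam α β g x y (ψ r))
    (hψ : ∀ r ∈ V, IsLocalRightInverseAt x y ψ r) {p : ℝ × ℝ} (hp : p ∈ V) :
    SatisfiesCAEAt (fun r => 1 / g (ψ r) ^ 2) p := by
  have hZv : pdy (fun r => 1 / g (ψ r) ^ 2)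
      =ᶠ[𝓝 p] fun r => (cot (β (ψ r)) - cot (α (ψ r))) / g (ψ r) :=
    eventually_of_mem (hV.mem_nhds hp) fun r hr => (h r hr).pdy_one_div_sq_comp (hψ r hr)
  have hWu : pdx (fun r => 1 / (1 / g (ψ r) ^ 2))
      =ᶠ[𝓝 p] fun r => g (ψ r) * (cot (α (ψ r)) + cot (β (ψ r))) :=
    eventually_of_mem (hV.mem_nhds hp) fun r hr => by
      simpa only [one_div_one_div] using (h r hr).pdx_sq_comp (hψ r hr)
  rw [SatisfiesCAEAt, hZv.pdy_eq, hWu.pdx_eq]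
  exact (h p hp).pdy_add_pdx_add_two_eq_zero (hψ p hp)

/-- If `(ω, ω̃)` satisfies the Bäcklund system with parameter `λ ≠ 0` on an open set
`U`, and `x, y, g` are the associated potentials with `g > 0` on `U`, and `ψ` inverts
the map `(x, y)` on an open set `V`, then `Z(u,v) := 1/g(ψ(u,v))²` satisfies the
constant astigmatism equation `Z_vv + (1/Z)_uu + 2 = 0` on `V`. -/
theorem cae_from_backlund_potentials (lam : ℝ) (hlam : lam ≠ 0)
    (U V : Set (ℝ × ℝ)) (hU : IsOpen U) (hV : IsOpen V)
    (ω ω' x y g : ℝ × ℝ → ℝ)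
    (hω : ContDiffOn ℝ 2 ω U) (hω' : ContDiffOn ℝ 2 ω' U)
    (hxC : ContDiffOn ℝ 2 x U) (hyC : ContDiffOn ℝ 2 y U) (hgC : ContDiffOn ℝ 2 g U)
    (hB1 : ∀ p ∈ U, pdx (fun q => (ω' q - ω q) / 2) p
      = lam * Real.sin ((ω' p + ω p) / 2))
    (hB2 : ∀ p ∈ U, pdy (fun q => (ω' q + ω q) / 2) p
      = (1 / lam) * Real.sin ((ω' p - ω p) / 2))
    (hx1 : ∀ p ∈ U, pdx x p = lam * g p * Real.sin ((ω' p + ω p) / 2))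
    (hx2 : ∀ p ∈ U, pdy x p = (1 / lam) * g p * Real.sin ((ω' p - ω p) / 2))
    (hy1 : ∀ p ∈ U, pdx y p = (lam / g p) * Real.sin ((ω' p + ω p) / 2))
    (hy2 : ∀ p ∈ U, pdy y p = -(1 / (lam * g p)) * Real.sin ((ω' p - ω p) / 2))
    (hg1 : ∀ p ∈ U, pdx g p = lam * g p * Real.cos ((ω' p + ω p) / 2))
    (hg2 : ∀ p ∈ U, pdy g p = (g p / lam) * Real.cos ((ω' p - ω p) / 2))
    (hgpos : ∀ p ∈ U, 0 < g p)
    (ψ : ℝ × ℝ → ℝ × ℝ) (hψ : ContDiffOn ℝ 2 ψ V) (hψU : ∀ p ∈ V, ψ p ∈ U)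
    (hψx : ∀ p ∈ V, x (ψ p) = p.1)
    (hψy : ∀ p ∈ V, y (ψ p) = p.2) :
    ∀ p ∈ V,
      pdy (pdy (fun q => 1 / (g (ψ q)) ^ 2)) p
        + pdx (pdx (fun q => 1 / (1 / (g (ψ q)) ^ 2))) p + 2 = 0 := by
  have hdiff {F : ℝ × ℝ → ℝ} (hF : ContDiffOn ℝ 2 F U) {q : ℝ × ℝ} (hq : q ∈ U) :
      DifferentiableAt ℝ F q :=
    (hF.contDiffAt (hU.mem_nhds hq)).differentiableAt (by norm_num)
  have hpot : ∀ q ∈ U, BacklundPotentialsAt lam (fun q => (ω' q + ω q) / 2)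
      (fun q => (ω' q - ω q) / 2) g x y q := fun q hq =>
    { lam_ne_zero := hlam
      differentiableAt_α := hdiff ((hω'.add hω).div_const 2) hq
      differentiableAt_β := hdiff ((hω'.sub hω).div_const 2) hq
      differentiableAt_g := hdiff hgC hq
      differentiableAt_x := hdiff hxC hq
      differentiableAt_y := hdiff hyC hq
      pdx_β := hB1 q hq
      pdy_α := hB2 q hq
      pdx_x := hx1 q hq
      pdy_x := hx2 q hq
      pdx_y := hy1 q hq
      pdy_y := hy2 q hq
      pdx_g := hg1 q hq
      pdy_g := hg2 q hq
      g_ne_zero := (hgpos q hq).ne' }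
  have hinv : ∀ r ∈ V, IsLocalRightInverseAt x y ψ r := fun r hr =>
    { differentiableAt := (hψ.contDiffAt (hV.mem_nhds hr)).differentiableAt (by norm_num)
      x_comp := eventually_of_mem (hV.mem_nhds hr) hψx
      y_comp := eventually_of_mem (hV.mem_nhds hr) hψy }
  exact fun p hp => satisfiesCAEAt_one_div_sq_comp hV (fun r hr => hpot _ (hψU r hr)) hinv hp
end
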